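/- arXiv:2504.19999 — 7 statements merged into one kernel-verified Lean document; each statement's English description precedes it below -/
import Mathlib

section
/- Let y₀ > 0 and define y_n = ln(1 + y_{n−1}) for n ≥ 1. Then the sequence 2/y_n − n + (1/3)·ln(n) converges to a finite limit C = C(y₀) as n → ∞ (this limit is the constant C = −g(y₀) appearing in the power-logarithmic expansion of y_n). -/
open Filter Topology

lemma log_taylor3 (x : ℝ) (hx : 0 < x) (hx6 : x ≤ 1/6) :
    |Real.log (1+x) - (x - x^2/2 + x^3/3)| ≤ (6/5) * x^4 := by
  have h := Real.abs_log_sub_add_sum_range_le (x := -x) (by rw [abs_neg, abs_of_pos hx]; linarith) 3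
  rw [abs_neg, abs_of_pos hx] at h
  have e1 : (1 : ℝ) - (-x) = 1 + x := by ring
  rw [e1] at h
  have e2 : ∑ i ∈ Finset.range 3, (-x) ^ (i + 1) / (↑i + 1) = -x + x^2/2 - x^3/3 := by
    simp [Finset.sum_range_succ]; ring
  rw [e2] at h
  have e3 : -x + x ^ 2 / 2 - x ^ 3 / 3 + Real.log (1 + x)
      = Real.log (1+x) - (x - x^2/2 + x^3/3) := by ring
  rw [e3] at h
  have : x ^ (3+1) / (1 - x) ≤ (6/5) * x^4 := by
    rw [div_le_iff₀ (by linarith)]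
    nlinarith [pow_pos hx 4]
  linarith

lemma key_ineq (x : ℝ) (hx : 0 < x) (hx6 : x ≤ 1/6) :
    |2/Real.log (1+x) - 2/x - (1 - x/6)| ≤ 7 * x^2 := by
  set L := Real.log (1+x) with hL
  have ht := log_taylor3 x hx hx6
  rw [abs_le] at ht
  have hx4 : (0:ℝ) < x^4 := pow_pos hx 4
  have hLlb : x - x^2/2 ≤ L := by nlinarith
  have hLub : L ≤ x := by nlinarith
  have hLpos : 0 < L := by nlinarith
  have heq : 2/L - 2/x - (1 - x/6) = (2*x - 2*L - x*L + x^2*L/6) / (x*L) := by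
    field_simp
    ring
  rw [heq]
  have hnum : |2*x - 2*L - x*L + x^2*L/6| ≤ 4*x^4 := by
    rw [abs_le]
    constructor <;> nlinarith
  have hden : (11/12) * x^2 ≤ x * L := by nlinarith
  have hdenpos : 0 < x * L := by positivity
  rw [abs_div, abs_of_pos hdenpos, div_le_iff₀ hdenpos]
  nlinarith [abs_nonneg (2*x - 2*L - x*L + x^2*L/6)]

lemma log_diff_ge (s t : ℝ) (hs : 0 < s) (hst : s ≤ t) :
    (t - s)/t ≤ Real.log t - Real.log s := by
  have ht : 0 < t := lt_of_lt_of_le hs hst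
  have h := Real.log_le_sub_one_of_pos (x := s/t) (by positivity)
  rw [Real.log_div (ne_of_gt hs) (ne_of_gt ht)] at h
  have : s/t - 1 = -((t-s)/t) := by field_simp; ring
  linarith [this ▸ h]

lemma log_diff_le (s t : ℝ) (hs : 0 < s) (hst : s ≤ t) :
    Real.log t - Real.log s ≤ (t - s)/s := by
  have ht : 0 < t := lt_of_lt_of_le hs hst
  have h := Real.log_le_sub_one_of_pos (x := t/s) (by positivity)
  rw [Real.log_div (ne_of_gt ht) (ne_of_gt hs)] at h
  have : t/s - 1 = (t-s)/s := by field_simp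
  linarith [this ▸ h]

lemma log_succ_bound (n : ℝ) (hn : 1 ≤ n) :
    |Real.log (n+1) - Real.log n - 1/n| ≤ 1/n^2 := by
  have hn0 : 0 < n := by linarith
  have h1 := log_diff_ge n (n+1) hn0 (by linarith)
  have h2 := log_diff_le n (n+1) hn0 (by linarith)
  rw [abs_le]
  have e1 : (n + 1 - n)/(n+1) = 1/(n+1) := by ring_nf
  have e2 : (n + 1 - n)/n = 1/n := by ring_nf
  rw [e1] at h1; rw [e2] at h2
  constructor
  · have : 1/n - 1/(n+1) ≤ 1/n^2 := by
      rw [div_sub_div _ _ (ne_of_gt hn0) (by linarith), div_le_div_iff₀ (by positivity) (by positivity)]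
      nlinarith
    linarith
  · linarith [one_div_pos.mpr hn0, sq_nonneg n,
      one_div_nonneg.mpr (le_of_lt (by positivity : (0:ℝ) < n^2))]

lemma log_le_two_sqrt (n : ℝ) (hn : 0 ≤ n) : Real.log n ≤ 2 * Real.sqrt n := by
  rcases eq_or_lt_of_le hn with h | h
  · simp [← h]
  have hs : 0 < Real.sqrt n := Real.sqrt_pos.mpr h
  have h2 := Real.log_le_sub_one_of_pos hs
  have e : Real.log (Real.sqrt n) = Real.log n / 2 := Real.log_sqrt hn
  rw [e] at h2
  linarith

lemma summable_sqrt_div_sq : Summable (fun n : ℕ => Real.sqrt n / (n:ℝ)^2) := by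
  have hs : Summable (fun n : ℕ => (n:ℝ) ^ (-(3/2) : ℝ)) :=
    Real.summable_nat_rpow.mpr (by norm_num)
  apply Summable.of_nonneg_of_le (fun n => by positivity) _ hs
  intro n
  rcases Nat.eq_zero_or_pos n with h | h
  · simp [h, Real.zero_rpow (by norm_num : (-(3/2):ℝ) ≠ 0)]
  · have hn : (0:ℝ) < n := by exact_mod_cast h
    rw [Real.sqrt_eq_rpow]
    rw [show ((n:ℝ)^2 : ℝ) = (n:ℝ) ^ ((2:ℕ):ℝ) by rw [Real.rpow_natCast]]
    rw [← Real.rpow_sub hn]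
    norm_num

set_option maxHeartbeats 1600000 in
/-- For `y₀ > 0` and `yₙ = ln(1 + yₙ₋₁)`, the sequence
`2/yₙ − n + (1/3)·ln n` converges to a finite limit `C = C(y₀)`. -/
theorem stmt_2 (y : ℕ → ℝ) (hy0 : 0 < y 0)
    (hrec : ∀ n : ℕ, y (n + 1) = Real.log (1 + y n)) :
    ∃ C : ℝ, Tendsto (fun n : ℕ => 2 / y n - (n : ℝ) + (1 / 3) * Real.log n)
      atTop (𝓝 C) := by
  set b : ℕ → ℝ := fun n : ℕ => 2 / y n - (n : ℝ) + (1 / 3) * Real.log n with hb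
  have hpos : ∀ n, 0 < y n := by
    intro n
    induction n with
    | zero => exact hy0
    | succ k ih => rw [hrec k]; exact Real.log_pos (by linarith)
  have hdec : ∀ n, y (n+1) < y n := by
    intro n
    rw [hrec n]
    have h := Real.log_lt_sub_one_of_pos (x := 1 + y n) (by linarith [hpos n])
      (by have := hpos n; intro hc; linarith)
    linarith
  -- y tends to 0
  have hanti : Antitone y := antitone_nat_of_succ_le (fun n => (hdec n).le)
  have hbdd : BddBelow (Set.range y) := ⟨0, fun x ⟨n, hn⟩ => hn ▸ (hpos n).le⟩
  have htendl : Tendsto y atTop (𝓝 (⨅ n, y n)) := tendsto_atTop_ciInf hanti hbdd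
  set l := ⨅ n, y n with hl
  have hl0 : 0 ≤ l := le_ciInf (fun n => (hpos n).le)
  have h1 : Tendsto (fun n => y (n+1)) atTop (𝓝 l) := htendl.comp (tendsto_add_atTop_nat 1)
  have hc : Tendsto (fun x : ℝ => Real.log (1+x)) (𝓝 l) (𝓝 (Real.log (1+l))) :=
    ((Real.continuousAt_log (by linarith : (1:ℝ)+l ≠ 0)).comp
      (continuousAt_const.add continuousAt_id)).tendsto
  have h2 : Tendsto (fun n => Real.log (1 + y n)) atTop (𝓝 (Real.log (1+l))) :=
    hc.comp htendl
  have h2' : Tendsto (fun n => y (n+1)) atTop (𝓝 (Real.log (1+l))) := by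
    simpa only [← hrec] using h2
  have hfix : l = Real.log (1+l) := tendsto_nhds_unique h1 h2'
  have hl_eq : l = 0 := by
    by_contra h
    have hlpos : 0 < l := lt_of_le_of_ne hl0 (Ne.symm h)
    have := Real.log_lt_sub_one_of_pos (x := 1 + l) (by linarith) (by intro hc'; linarith)
    linarith [hfix]
  have htend0 : Tendsto y atTop (𝓝 0) := hl_eq ▸ htendl
  obtain ⟨N₀, hN₀⟩ := eventually_atTop.1
    (htend0.eventually (gt_mem_nhds (by norm_num : (0:ℝ) < 1/42)))
  set N₁ := max N₀ 100 with hN₁def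
  have hN₁ : ∀ n, N₁ ≤ n → y n < 1/42 := fun n hn => hN₀ n (le_trans (le_max_left _ _) hn)
  have h100 : 100 ≤ N₁ := le_max_right _ _
  -- key recurrence estimate
  have hkey : ∀ n, N₁ ≤ n → |2/y (n+1) - 2/y n - (1 - y n/6)| ≤ 7 * (y n)^2 := by
    intro n hn
    rw [hrec n]
    exact key_ineq (y n) (hpos n) (by linarith [hN₁ n hn])
  have hstep_lb : ∀ n, N₁ ≤ n → 3/4 ≤ 2/y (n+1) - 2/y n := by
    intro n hn
    have h := (abs_le.1 (hkey n hn)).1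
    have hy := hN₁ n hn; have hp := hpos n
    nlinarith
  have hstep_ub : ∀ n, N₁ ≤ n → 2/y (n+1) - 2/y n ≤ 1 := by
    intro n hn
    have h := (abs_le.1 (hkey n hn)).2
    have hy := hN₁ n hn; have hp := hpos n
    nlinarith
  -- crude growth bounds
  have hub : ∀ n, N₁ ≤ n → 2/y n ≤ 2/y N₁ + ((n:ℝ) - N₁) := by
    intro n hn
    induction n, hn using Nat.le_induction with
    | base => simp
    | succ n hn ih =>
      have h := hstep_ub n hn
      push_cast
      push_cast at ih
      linarith
  have hlb : ∀ n, N₁ ≤ n → 2/y N₁ + (3/4) * ((n:ℝ) - N₁) ≤ 2/y n := by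
    intro n hn
    induction n, hn using Nat.le_induction with
    | base => simp
    | succ n hn ih =>
      have h := hstep_lb n hn
      push_cast
      push_cast at ih
      linarith
  set M := 3 * N₁ + 100 with hM
  have hMN₁ : N₁ ≤ M := by omega
  have hM100 : 100 ≤ M := by omega
  have haM : ∀ n, M ≤ n → (n:ℝ)/2 ≤ 2/y n := by
    intro n hn
    have h := hlb n (le_trans hMN₁ hn)
    have h84 : (84:ℝ) ≤ 2/y N₁ := by
      have hy := hN₁ N₁ le_rfl; have hp := hpos N₁
      rw [le_div_iff₀ hp]; linarith
    have hcast : 3*(N₁:ℝ) + 100 ≤ n := by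
      have : 3 * N₁ + 100 ≤ n := hM ▸ hn
      exact_mod_cast this
    linarith
  have hy4 : ∀ n, M ≤ n → y n ≤ 4/(n:ℝ) := by
    intro n hn
    have ha := haM n hn
    have hp := hpos n
    have hn0 : (0:ℝ) < n := by
      have : (100:ℕ) ≤ n := le_trans hM100 hn
      exact_mod_cast lt_of_lt_of_le (by norm_num : (0:ℕ) < 100) this
    rw [le_div_iff₀ hp] at ha
    rw [le_div_iff₀ hn0]
    nlinarith
  have hn100R : ∀ n, M ≤ n → (100:ℝ) ≤ n := by
    intro n hn
    have : (100:ℕ) ≤ n := le_trans hM100 hn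
    exact_mod_cast this
  -- refined step lower bound
  have hstep2 : ∀ n, M ≤ n → 2/y n + 1 - 2/(n:ℝ) ≤ 2/y (n+1) := by
    intro n hn
    have h := (abs_le.1 (hkey n (le_trans hMN₁ hn))).1
    have hyn := hy4 n hn
    have hp := hpos n
    have hn0 : (100:ℝ) ≤ n := hn100R n hn
    have hnpos : (0:ℝ) < n := by linarith
    have hyn' : y n * (n:ℝ) ≤ 4 := by
      rw [le_div_iff₀ hnpos] at hyn
      exact hyn
    have hsmall : y n/6 + 7*(y n)^2 ≤ 2/(n:ℝ) := by
      rw [le_div_iff₀ hnpos]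
      nlinarith [mul_nonneg hp.le (by linarith : (0:ℝ) ≤ 4 - y n * (n:ℝ)),
        mul_nonneg hp.le (by linarith : (0:ℝ) ≤ (n:ℝ) - 100)]
    linarith
  -- logarithmic lower bound
  have hlog_lb : ∀ n, M ≤ n →
      2/y M + ((n:ℝ) - M) - 2*(Real.log ((n:ℝ)-1) - Real.log ((M:ℝ)-1)) ≤ 2/y n := by
    intro n hn
    induction n, hn using Nat.le_induction with
    | base => simp
    | succ n hn ih =>
      have h2 := hstep2 n hn
      have hn0 : (100:ℝ) ≤ n := hn100R n hn
      have hld : 2/(n:ℝ) ≤ 2*Real.log n - 2*Real.log ((n:ℝ)-1) := by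
        have h := log_diff_ge ((n:ℝ)-1) n (by linarith) (by linarith)
        rw [show ((n:ℝ) - ((n:ℝ)-1)) = 1 by ring] at h
        rw [show (2:ℝ)/(n:ℝ) = 2*(1/(n:ℝ)) by ring]
        linarith
      push_cast
      rw [show (n:ℝ)+1-1 = (n:ℝ) by ring]
      push_cast at ih
      linarith
  -- |2/y n - n| ≤ C₁ + 2 log n
  set C₁ := |2/y N₁ - (N₁:ℝ)| + |2/y M - (M:ℝ)| + 2*|Real.log ((M:ℝ)-1)| + 2 with hC₁def
  have hC₁0 : 0 ≤ C₁ := by positivity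
  have habsb : ∀ n, M ≤ n → |2/y n - (n:ℝ)| ≤ C₁ + 2 * Real.log n := by
    intro n hn
    have hub' := hub n (le_trans hMN₁ hn)
    have hlb' := hlog_lb n hn
    have hn0 : (100:ℝ) ≤ n := hn100R n hn
    have hlogn : 0 ≤ Real.log n := Real.log_nonneg (by linarith)
    have hlogmono : Real.log ((n:ℝ)-1) ≤ Real.log n :=
      Real.log_le_log (by linarith) (by linarith)
    rw [abs_le]
    constructor
    · linarith [neg_abs_le (2/y M - (M:ℝ)), neg_abs_le (Real.log ((M:ℝ)-1)),
        le_abs_self (Real.log ((M:ℝ)-1)), abs_nonneg (2/y N₁ - (N₁:ℝ))]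
    · linarith [le_abs_self (2/y N₁ - (N₁:ℝ)), abs_nonneg (2/y M - (M:ℝ)),
        abs_nonneg (Real.log ((M:ℝ)-1))]
  set K := C₁ + 116 with hKdef
  -- difference bound for b
  have hbd : ∀ n, M ≤ n → |b (n+1) - b n| ≤ K * Real.sqrt n / (n:ℝ)^2 := by
    intro n hn
    have hn0 : (100:ℝ) ≤ n := hn100R n hn
    have hnpos : (0:ℝ) < n := by linarith
    have hp := hpos n
    have hk := hkey n (le_trans hMN₁ hn)
    have hls := log_succ_bound (n:ℝ) (by linarith)
    have hab := habsb n hn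
    have hyn := hy4 n hn
    have hyn' : y n * (n:ℝ) ≤ 4 := by
      rw [le_div_iff₀ hnpos] at hyn
      exact hyn
    have hlogn : 0 ≤ Real.log n := Real.log_nonneg (by linarith)
    have hde : b (n+1) - b n = (2/y (n+1) - 2/y n - (1 - y n/6))
        + (1/3)*(Real.log ((n:ℝ)+1) - Real.log n - 1/(n:ℝ))
        + (1/3)*(1/(n:ℝ) - y n/2) := by
      simp only [hb]
      push_cast
      ring
    set A := 2/y (n+1) - 2/y n - (1 - y n/6) with hA
    set Bv := Real.log ((n:ℝ)+1) - Real.log (n:ℝ) - 1/(n:ℝ) with hBv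
    set Cv := 1/(n:ℝ) - y n/2 with hCv
    -- third term bound
    have h3 : |Cv| ≤ (2*C₁ + 4*Real.log n)/(n:ℝ)^2 := by
      have e : Cv = (2/y n - n) * (y n/(2*n)) := by
        rw [hCv]
        field_simp
      rw [e, abs_mul, abs_of_pos (show 0 < y n/(2*(n:ℝ)) by positivity)]
      have hy2 : y n/(2*(n:ℝ)) ≤ 2/(n:ℝ)^2 := by
        rw [div_le_div_iff₀ (by positivity) (by positivity)]
        nlinarith [mul_le_mul_of_nonneg_right hyn' hnpos.le]
      calc |2/y n - (n:ℝ)| * (y n/(2*(n:ℝ)))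
          ≤ (C₁ + 2*Real.log n) * (2/(n:ℝ)^2) := by
            apply mul_le_mul hab hy2 (by positivity) (by linarith)
        _ = (2*C₁ + 4*Real.log n)/(n:ℝ)^2 := by ring
    -- first term bound
    have h1' : |A| ≤ 112/(n:ℝ)^2 := by
      refine hk.trans ?_
      rw [le_div_iff₀ (by positivity)]
      nlinarith [mul_nonneg (mul_nonneg hp.le hnpos.le)
        (by linarith : (0:ℝ) ≤ 4 - y n * (n:ℝ))]
    have hd1 : |b (n+1) - b n| ≤ |A| + 1/3*|Bv| + 1/3*|Cv| := by
      rw [hde]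
      calc |A + 1/3*Bv + 1/3*Cv| ≤ |A + 1/3*Bv| + |1/3*Cv| := abs_add_le _ _
        _ ≤ |A| + |1/3*Bv| + |1/3*Cv| := by linarith [abs_add_le A (1/3*Bv)]
        _ = |A| + 1/3*|Bv| + 1/3*|Cv| := by
              rw [abs_mul, abs_mul, abs_of_pos (show (0:ℝ) < 1/3 by norm_num)]
    have habs3 : |b (n+1) - b n| ≤ 112/(n:ℝ)^2 + 1/3*(1/(n:ℝ)^2)
        + 1/3*((2*C₁ + 4*Real.log n)/(n:ℝ)^2) := by
      have hBb : |Bv| ≤ 1/(n:ℝ)^2 := hls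
      linarith
    have hsum_eq : 112/(n:ℝ)^2 + 1/3*(1/(n:ℝ)^2) + 1/3*((2*C₁ + 4*Real.log n)/(n:ℝ)^2)
        = (337/3 + (2/3)*C₁ + (4/3)*Real.log n)/(n:ℝ)^2 := by
      field_simp
      ring
    rw [hsum_eq] at habs3
    refine habs3.trans ?_
    have hsqrt1 : 1 ≤ Real.sqrt n := by
      rw [show (1:ℝ) = Real.sqrt 1 by simp]
      exact Real.sqrt_le_sqrt (by linarith)
    have hlog2 : Real.log n ≤ 2 * Real.sqrt n := log_le_two_sqrt n (by linarith)
    have hnum : 337/3 + (2/3)*C₁ + (4/3)*Real.log n ≤ K * Real.sqrt n := by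
      rw [hKdef]
      nlinarith [mul_nonneg hC₁0 (by linarith : (0:ℝ) ≤ Real.sqrt (n:ℝ) - 2/3)]
    gcongr
  -- summability and conclusion
  have hsum : Summable (fun m : ℕ => dist (b (m + M)) (b (m + 1 + M))) := by
    have hg : Summable (fun m : ℕ => K * (Real.sqrt (↑(m + M)) / ((m + M : ℕ):ℝ)^2)) :=
      Summable.mul_left K ((summable_nat_add_iff M).2 summable_sqrt_div_sq)
    apply Summable.of_nonneg_of_le (fun m => dist_nonneg) _ hg
    intro m
    rw [show m + 1 + M = m + M + 1 by omega, Real.dist_eq, abs_sub_comm]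
    have h := hbd (m + M) (Nat.le_add_left M m)
    rw [mul_div_assoc] at h
    exact h
  have hcauchy : CauchySeq (fun m => b (m + M)) := cauchySeq_of_summable_dist hsum
  obtain ⟨C, hC⟩ := cauchySeq_tendsto_of_complete hcauchy
  exact ⟨C, (tendsto_add_atTop_iff_nat M).1 hC⟩
end

section
/- Define h_n : ℝ → ℝ by h₀(x) = x and h_n(x) = ln(1 + h_{n−1}(eˣ)) for n ≥ 1. Then for every x ∈ ℝ the sequence (h_n(x)) converges to a finite limit h(x). -/
open Filter Topology

/-- With `h₀(x) = x` and `hₙ(x) = ln(1 + hₙ₋₁(eˣ))`, for every `x` the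
sequence `(hₙ(x))` converges to a finite limit. -/
theorem stmt_6 (h : ℕ → ℝ → ℝ) (h0 : ∀ x : ℝ, h 0 x = x)
    (hrec : ∀ (n : ℕ) (x : ℝ), h (n + 1) x = Real.log (1 + h n (Real.exp x))) :
    ∀ x : ℝ, ∃ L : ℝ, Tendsto (fun n : ℕ => h n x) atTop (𝓝 L) := by
  have nonneg : ∀ n : ℕ, ∀ x : ℝ, 0 ≤ x → 0 ≤ h n x := by
    intro n
    induction n with
    | zero => intro x hx; rw [h0]; exact hx
    | succ n ih =>
      intro x hx
      rw [hrec]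
      exact Real.log_nonneg (by linarith [ih (Real.exp x) (Real.exp_pos x).le])
  have mono : ∀ n : ℕ, ∀ x : ℝ, h n x ≤ h (n+1) x := by
    intro n
    induction n with
    | zero =>
      intro x
      rw [h0, hrec, h0]
      calc x = Real.log (Real.exp x) := (Real.log_exp x).symm
        _ ≤ Real.log (1 + Real.exp x) := by
            apply Real.log_le_log (Real.exp_pos x)
            linarith [Real.exp_pos x]
    | succ n ih =>
      intro x
      rw [hrec, hrec]
      apply Real.log_le_log
      · linarith [nonneg n (Real.exp x) (Real.exp_pos x).le]
      · linarith [ih (Real.exp x)]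
  have bound : ∀ n : ℕ, ∀ x : ℝ, h n x ≤ Real.log (1 + Real.exp x) + 2 * Real.exp (-x) := by
    intro n
    induction n with
    | zero =>
      intro x
      rw [h0]
      have h1 : x = Real.log (Real.exp x) := (Real.log_exp x).symm
      have h2 : Real.log (Real.exp x) ≤ Real.log (1 + Real.exp x) := by
        apply Real.log_le_log (Real.exp_pos x)
        linarith [Real.exp_pos x]
      have h3 : 0 < Real.exp (-x) := Real.exp_pos _
      linarith
    | succ n ih =>
      intro x
      rw [hrec]
      set t : ℝ := Real.exp x with ht
      have ht0 : 0 < t := Real.exp_pos x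
      have het : 1 ≤ Real.exp t := Real.one_le_exp ht0.le
      -- step 2 : log (1 + exp t) ≤ t + log 2
      have step2 : Real.log (1 + Real.exp t) ≤ t + Real.log 2 := by
        have : (1 : ℝ) + Real.exp t ≤ 2 * Real.exp t := by linarith
        calc Real.log (1 + Real.exp t) ≤ Real.log (2 * Real.exp t) := by
              apply Real.log_le_log (by positivity) this
          _ = Real.log 2 + t := by
              rw [Real.log_mul (by norm_num) (Real.exp_pos t).ne', Real.log_exp]
          _ = t + Real.log 2 := by ring
      have hu : Real.exp (-t) * (1 + t) ≤ 1 := by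
        have h1 : 1 + t ≤ Real.exp t := by linarith [Real.add_one_le_exp t]
        calc Real.exp (-t) * (1 + t) ≤ Real.exp (-t) * Real.exp t :=
              mul_le_mul_of_nonneg_left h1 (Real.exp_pos _).le
          _ = 1 := by rw [← Real.exp_add]; simp
      -- combined bound on the argument
      have harg : 1 + h n t ≤ 1 + t + Real.log 2 + 2 * Real.exp (-t) := by
        have := ih t
        linarith
      have hlog2 : Real.log 2 ≤ 1 := by
        have := Real.log_le_sub_one_of_pos (by norm_num : (0:ℝ) < 2)
        linarith
      have hl2pos : (0:ℝ) < Real.log 2 := Real.log_pos (by norm_num)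
      have hepos : (0:ℝ) < Real.exp (-t) := Real.exp_pos _
      have hA0 : (0:ℝ) < 1 + t + Real.log 2 + 2 * Real.exp (-t) := by linarith
      have hpos1t : (0:ℝ) < 1 + t := by linarith
      have hAdiv : (0:ℝ) < (1 + t + Real.log 2 + 2 * Real.exp (-t)) / (1 + t) := by positivity
      have key : Real.log (1 + h n t) ≤ Real.log (1 + t) + 2 / t := by
        have m1 : Real.log (1 + h n t) ≤ Real.log (1 + t + Real.log 2 + 2 * Real.exp (-t)) :=
          Real.log_le_log (by linarith [nonneg n t ht0.le]) harg
        have m2 : Real.log (1 + t + Real.log 2 + 2 * Real.exp (-t)) - Real.log (1 + t)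
            ≤ (Real.log 2 + 2 * Real.exp (-t)) / (1 + t) := by
          rw [← Real.log_div hA0.ne' hpos1t.ne']
          have hs := Real.log_le_sub_one_of_pos hAdiv
          have heq : (1 + t + Real.log 2 + 2 * Real.exp (-t)) / (1 + t) - 1
              = (Real.log 2 + 2 * Real.exp (-t)) / (1 + t) := by
            field_simp; ring
          linarith [hs, heq]
        have m3 : (Real.log 2 + 2 * Real.exp (-t)) / (1 + t) ≤ 2 / t := by
          rw [div_le_div_iff₀ hpos1t ht0]
          nlinarith [hu, hlog2, ht0, hepos]
        linarith
      have h2t : 2 / t = 2 * Real.exp (-x) := by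
        rw [Real.exp_neg, ht, div_eq_mul_inv]
      linarith [key, h2t.symm.le, h2t.le]
  intro x
  refine ⟨⨆ n, h n x, tendsto_atTop_ciSup (monotone_nat_of_le_succ (fun n => mono n x)) ?_⟩
  exact ⟨Real.log (1 + Real.exp x) + 2 * Real.exp (-x),
    fun y ⟨n, hn⟩ => hn ▸ bound n x⟩
end

section
/- Define h_n : ℝ → ℝ by h₀(x) = x and h_n(x) = ln(1 + h_{n−1}(eˣ)) for n ≥ 1. Given x₀ = x ∈ ℝ, let x_j = e^{x_{j−1}} for j ≥ 1 (so x_j is the j-th iterate of exp applied to x). Then for every n ≥ 1, h_n′(x) = ∏_{j=0}^{n−1} exp(x_j − h_{n−j}(x_j)). -/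
lemma stmt_9_pos (h : ℕ → ℝ → ℝ) (h0 : ∀ x : ℝ, h 0 x = x)
    (hrec : ∀ (n : ℕ) (x : ℝ), h (n + 1) x = Real.log (1 + h n (Real.exp x))) :
    ∀ n : ℕ, ∀ y : ℝ, 0 < h (n + 1) y := by
  intro n
  induction n with
  | zero =>
    intro y
    rw [hrec, h0]
    exact Real.log_pos (by linarith [Real.exp_pos y])
  | succ m ih =>
    intro y
    rw [hrec]
    exact Real.log_pos (by linarith [ih (Real.exp y)])

lemma stmt_9_aux (h : ℕ → ℝ → ℝ) (h0 : ∀ x : ℝ, h 0 x = x)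
    (hrec : ∀ (n : ℕ) (x : ℝ), h (n + 1) x = Real.log (1 + h n (Real.exp x))) :
    ∀ n : ℕ, ∀ y : ℝ, 0 < 1 + h n (Real.exp y) := by
  intro n y
  cases n with
  | zero => rw [h0]; linarith [Real.exp_pos y]
  | succ m => linarith [stmt_9_pos h h0 hrec m (Real.exp y)]

lemma stmt_9_expid (h : ℕ → ℝ → ℝ) (h0 : ∀ x : ℝ, h 0 x = x)
    (hrec : ∀ (n : ℕ) (x : ℝ), h (n + 1) x = Real.log (1 + h n (Real.exp x))) :
    ∀ n : ℕ, ∀ y : ℝ, Real.exp (h (n + 1) y) = 1 + h n (Real.exp y) := by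
  intro n y
  rw [hrec]
  exact Real.exp_log (stmt_9_aux h h0 hrec n y)

lemma stmt_9_key (h : ℕ → ℝ → ℝ) (h0 : ∀ x : ℝ, h 0 x = x)
    (hrec : ∀ (n : ℕ) (x : ℝ), h (n + 1) x = Real.log (1 + h n (Real.exp x))) :
    ∀ n : ℕ, ∀ y : ℝ, HasDerivAt (h (n + 1))
      (∏ j ∈ Finset.range (n + 1),
        Real.exp (Real.exp^[j] y - h (n + 1 - j) (Real.exp^[j] y))) y := by
  intro n
  induction n with
  | zero =>
    intro y
    have heq : h 1 = fun z => Real.log (1 + h 0 (Real.exp z)) := funext fun z => hrec 0 z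
    have hd : HasDerivAt (fun z => Real.log (1 + h 0 (Real.exp z)))
        (Real.exp y / (1 + h 0 (Real.exp y))) y := by
      have h1 : HasDerivAt (fun z : ℝ => 1 + h 0 (Real.exp z)) (Real.exp y) y := by
        have : HasDerivAt (fun z : ℝ => 1 + Real.exp z) (Real.exp y) y :=
          (Real.hasDerivAt_exp y).const_add 1
        convert this using 2 with z
        rw [h0]
      exact h1.log (ne_of_gt (stmt_9_aux h h0 hrec 0 y))
    rw [← heq] at hd
    convert hd using 1
    rw [Finset.prod_range_one]
    simp only [Function.iterate_zero, id_eq]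
    rw [Real.exp_sub, stmt_9_expid h h0 hrec 0 y]
  | succ m ih =>
    intro y
    set D := ∏ j ∈ Finset.range (m + 1),
      Real.exp (Real.exp^[j] (Real.exp y) - h (m + 1 - j) (Real.exp^[j] (Real.exp y))) with hD
    have hIH := ih (Real.exp y)
    have h1 : HasDerivAt (fun z : ℝ => 1 + h (m + 1) (Real.exp z)) (D * Real.exp y) y :=
      ((hIH.comp y (Real.hasDerivAt_exp y))).const_add 1
    have h2 : HasDerivAt (fun z : ℝ => Real.log (1 + h (m + 1) (Real.exp z)))
        (D * Real.exp y / (1 + h (m + 1) (Real.exp y))) y :=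
      h1.log (ne_of_gt (stmt_9_aux h h0 hrec (m + 1) y))
    have heq : h (m + 2) = fun z => Real.log (1 + h (m + 1) (Real.exp z)) :=
      funext fun z => hrec (m + 1) z
    rw [← heq] at h2
    convert h2 using 1
    rw [← stmt_9_expid h h0 hrec (m + 1) y]
    rw [Finset.prod_range_succ']
    have hfirst : (∏ j ∈ Finset.range (m + 1),
        Real.exp (Real.exp^[j + 1] y - h (m + 1 + 1 - (j + 1)) (Real.exp^[j + 1] y))) = D := by
      rw [hD]
      apply Finset.prod_congr rfl
      intro j hj
      have hsub : m + 1 + 1 - (j + 1) = m + 1 - j := by omega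
      rw [hsub, Function.iterate_succ_apply]
    rw [hfirst]
    simp only [Function.iterate_zero, id_eq, Nat.sub_zero]
    rw [Real.exp_sub]
    ring

/-- With `h₀(x) = x`, `hₙ(x) = ln(1 + hₙ₋₁(eˣ))`, `x₀ = x` and
`xⱼ = exp(xⱼ₋₁)`, one has `hₙ′(x) = ∏_{j=0}^{n−1} exp(xⱼ − hₙ₋ⱼ(xⱼ))` for
every `n ≥ 1`. -/
theorem stmt_9 (h : ℕ → ℝ → ℝ) (h0 : ∀ x : ℝ, h 0 x = x)
    (hrec : ∀ (n : ℕ) (x : ℝ), h (n + 1) x = Real.log (1 + h n (Real.exp x)))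
    (x : ℝ) (X : ℕ → ℝ) (hX0 : X 0 = x)
    (hXrec : ∀ j : ℕ, X (j + 1) = Real.exp (X j)) :
    ∀ n : ℕ, 1 ≤ n →
      deriv (h n) x = ∏ j ∈ Finset.range n, Real.exp (X j - h (n - j) (X j)) := by
  have hXit : ∀ j : ℕ, X j = Real.exp^[j] x := by
    intro j
    induction j with
    | zero => simpa using hX0
    | succ m ih => rw [hXrec, ih, ← Function.iterate_succ_apply' Real.exp]
  intro n hn
  obtain ⟨m, rfl⟩ := Nat.exists_eq_add_of_le hn
  rw [add_comm]
  rw [(stmt_9_key h h0 hrec m x).deriv]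
  apply Finset.prod_congr rfl
  intro j hj
  rw [hXit j]
end

section
/- Define f_n : ℝ → ℝ by f₀(x) = |x|^{√2} and f_n(x) = √(f_{n−1}(1 + x²) − 1) for n ≥ 1. Then for every n and every real s ≥ 1, f_n(s) ≥ s; in particular f_{n−1}(1 + x²) ≥ 1 + x² ≥ 1 for all x, so the recursion is well defined. -/
/-- With `f₀(x) = |x| ^ √2` and `fₙ(x) = √(fₙ₋₁(1 + x²) − 1)`, one has
`fₙ(s) ≥ s` for every `n` and every `s ≥ 1`; in particular
`fₙ₋₁(1 + x²) ≥ 1 + x² ≥ 1`, so the recursion is well defined. -/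
theorem stmt_14 (f : ℕ → ℝ → ℝ) (hf0 : ∀ x : ℝ, f 0 x = |x| ^ Real.sqrt 2)
    (hrec : ∀ (n : ℕ) (x : ℝ),
      f (n + 1) x = Real.sqrt (f n (1 + x ^ 2) - 1)) :
    (∀ (n : ℕ) (s : ℝ), 1 ≤ s → s ≤ f n s) ∧
      (∀ (n : ℕ) (x : ℝ), 1 + x ^ 2 ≤ f n (1 + x ^ 2) ∧ (1 : ℝ) ≤ 1 + x ^ 2) := by
  have key : ∀ (n : ℕ) (s : ℝ), 1 ≤ s → s ≤ f n s := by
    intro n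
    induction n with
    | zero =>
      intro s hs
      rw [hf0, abs_of_nonneg (by linarith)]
      have h12 : (1:ℝ) ≤ Real.sqrt 2 := by
        nlinarith [Real.sq_sqrt (by norm_num : (0:ℝ) ≤ 2), Real.sqrt_nonneg 2]
      calc s = s ^ (1 : ℝ) := (Real.rpow_one s).symm
        _ ≤ s ^ Real.sqrt 2 := Real.rpow_le_rpow_of_exponent_le hs h12
    | succ n ih =>
      intro s hs
      rw [hrec]
      have h1 : (1 : ℝ) ≤ 1 + s ^ 2 := by nlinarith
      have h2 := ih (1 + s ^ 2) h1
      have : s ^ 2 ≤ f n (1 + s ^ 2) - 1 := by linarith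
      calc s = Real.sqrt (s ^ 2) := by
            rw [Real.sqrt_sq (by linarith)]
        _ ≤ Real.sqrt (f n (1 + s ^ 2) - 1) := Real.sqrt_le_sqrt this
  refine ⟨key, fun n x => ⟨key n _ (by nlinarith), by nlinarith⟩⟩
end

section
/- Define f_n : ℝ → ℝ by f₀(x) = |x|^{√2} and f_n(x) = √(f_{n−1}(1 + x²) − 1) for n ≥ 1. Then for every x ∈ ℝ the sequence (f_n(x)) converges to a finite limit f(x). -/
open Filter Topology

private lemma aux_super {a b p : ℝ} (ha : 0 ≤ a) (hb : 0 ≤ b) (hp : 1 ≤ p) :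
    a ^ p + b ^ p ≤ (a + b) ^ p := by
  lift a to NNReal using ha
  lift b to NNReal using hb
  have := NNReal.add_rpow_le_rpow_add a b hp
  exact_mod_cast this

private lemma aux_sub {a b p : ℝ} (ha : 0 ≤ a) (hb : 0 ≤ b) (hp0 : 0 ≤ p) (hp1 : p ≤ 1) :
    (a + b) ^ p ≤ a ^ p + b ^ p := by
  lift a to NNReal using ha
  lift b to NNReal using hb
  have := NNReal.rpow_add_le_add_rpow a b hp0 hp1
  exact_mod_cast this

/-- With `f₀(x) = |x| ^ √2` and `fₙ(x) = √(fₙ₋₁(1 + x²) − 1)`, for every `x`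
the sequence `(fₙ(x))` converges to a finite limit. -/
theorem stmt_15 (f : ℕ → ℝ → ℝ) (hf0 : ∀ x : ℝ, f 0 x = |x| ^ Real.sqrt 2)
    (hrec : ∀ (n : ℕ) (x : ℝ),
      f (n + 1) x = Real.sqrt (f n (1 + x ^ 2) - 1)) :
    ∀ x : ℝ, ∃ L : ℝ, Tendsto (fun n : ℕ => f n x) atTop (𝓝 L) := by
  have h2 : (1:ℝ) ≤ Real.sqrt 2 := by
    rw [show (1:ℝ) = Real.sqrt 1 by simp]
    exact Real.sqrt_le_sqrt (by norm_num)
  have hp0 : (0:ℝ) ≤ Real.sqrt 2 / 2 := by positivity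
  have hp1 : Real.sqrt 2 / 2 ≤ 1 := by
    rw [div_le_one (by norm_num)]
    nlinarith [Real.sq_sqrt (by norm_num : (0:ℝ) ≤ 2), Real.sqrt_nonneg 2]
  -- monotonicity
  have hmono : ∀ n : ℕ, ∀ x : ℝ, f n x ≤ f (n + 1) x := by
    intro n
    induction n with
    | zero =>
      intro x
      rw [hf0 x, hrec, hf0]
      have hx2 : (0:ℝ) ≤ 1 + x ^ 2 := by positivity
      rw [abs_of_nonneg hx2]
      have key : (|x| ^ Real.sqrt 2) ^ 2 ≤ (1 + x ^ 2) ^ Real.sqrt 2 - 1 := by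
        have h1 : (1:ℝ) ^ Real.sqrt 2 + (x ^ 2) ^ Real.sqrt 2 ≤ (1 + x ^ 2) ^ Real.sqrt 2 :=
          aux_super (by norm_num) (by positivity) h2
        rw [Real.one_rpow] at h1
        have h3 : (|x| ^ Real.sqrt 2) ^ 2 = (x ^ 2) ^ Real.sqrt 2 := by
          rw [← sq_abs x, ← Real.rpow_natCast (|x| ^ Real.sqrt 2) 2,
            ← Real.rpow_natCast |x| 2, ← Real.rpow_mul (abs_nonneg x),
            ← Real.rpow_mul (abs_nonneg x), mul_comm]
        rw [h3]; linarith
      calc |x| ^ Real.sqrt 2 = Real.sqrt ((|x| ^ Real.sqrt 2) ^ 2) :=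
            (Real.sqrt_sq (by positivity)).symm
        _ ≤ Real.sqrt ((1 + x ^ 2) ^ Real.sqrt 2 - 1) := Real.sqrt_le_sqrt key
    | succ n ih =>
      intro x
      rw [hrec, hrec]
      exact Real.sqrt_le_sqrt (by linarith [ih (1 + x ^ 2)])
  -- upper bound
  have hbd : ∀ n : ℕ, ∀ x : ℝ, f n x ≤ (1 + x ^ 2) ^ (Real.sqrt 2 / 2) := by
    intro n
    induction n with
    | zero =>
      intro x
      rw [hf0 x]
      have h3 : |x| ^ Real.sqrt 2 = (x ^ 2) ^ (Real.sqrt 2 / 2) := by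
        rw [← sq_abs x, ← Real.rpow_natCast |x| 2, ← Real.rpow_mul (abs_nonneg x)]
        congr 1
        push_cast
        ring
      rw [h3]
      exact Real.rpow_le_rpow (by positivity) (by linarith [sq_nonneg x]) hp0
    | succ n ih =>
      intro x
      rw [hrec]
      have key : f n (1 + x ^ 2) - 1 ≤ ((1 + x ^ 2) ^ (Real.sqrt 2 / 2)) ^ 2 := by
        have h1 := ih (1 + x ^ 2)
        have h4 : (1 + (1 + x ^ 2) ^ 2) ^ (Real.sqrt 2 / 2)
            ≤ 1 + ((1 + x ^ 2) ^ 2) ^ (Real.sqrt 2 / 2) := by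
          have h5 := aux_sub (a := 1) (b := (1 + x ^ 2) ^ 2) (by norm_num) (by positivity) hp0 hp1
          rwa [Real.one_rpow] at h5
        have h6 : ((1 + x ^ 2) ^ 2) ^ (Real.sqrt 2 / 2) = ((1 + x ^ 2) ^ (Real.sqrt 2 / 2)) ^ 2 := by
          rw [← Real.rpow_natCast (1 + x ^ 2) 2, ← Real.rpow_mul (by positivity),
            ← Real.rpow_natCast ((1 + x ^ 2) ^ (Real.sqrt 2 / 2)) 2,
            ← Real.rpow_mul (by positivity)]
          push_cast
          ring_nf
        linarith
      calc Real.sqrt (f n (1 + x ^ 2) - 1)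
          ≤ Real.sqrt (((1 + x ^ 2) ^ (Real.sqrt 2 / 2)) ^ 2) := Real.sqrt_le_sqrt key
        _ = (1 + x ^ 2) ^ (Real.sqrt 2 / 2) := Real.sqrt_sq (by positivity)
  intro x
  have hm : Monotone (fun n : ℕ => f n x) := monotone_nat_of_le_succ (fun n => hmono n x)
  have hb : BddAbove (Set.range fun n : ℕ => f n x) :=
    ⟨(1 + x ^ 2) ^ (Real.sqrt 2 / 2), by rintro y ⟨n, rfl⟩; exact hbd n x⟩
  exact ⟨_, tendsto_atTop_ciSup hm hb⟩
end

section
/- Given x₀ = x > 0, let x_j = 1 + x_{j−1}² for j ≥ 1. Then the sequence p_n = (∏_{j=0}^{n−1} x_j) / x_n converges as n → ∞ to a finite positive limit p(x). -/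
open Filter Topology

/-- For `x₀ = x > 0` and `xⱼ = 1 + xⱼ₋₁²`, the sequence
`pₙ = (∏_{j=0}^{n−1} xⱼ) / xₙ` converges to a finite positive limit. -/
theorem stmt_18 (x : ℝ) (hx : 0 < x) (X : ℕ → ℝ) (hX0 : X 0 = x)
    (hXrec : ∀ j : ℕ, X (j + 1) = 1 + X j ^ 2) :
    ∃ p : ℝ, 0 < p ∧
      Tendsto (fun n : ℕ => (∏ j ∈ Finset.range n, X j) / X n) atTop (𝓝 p) := by
  have hpos : ∀ j, 0 < X j := by
    intro j
    induction j with
    | zero => rw [hX0]; exact hx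
    | succ n ih => rw [hXrec]; positivity
  have hge : ∀ j : ℕ, (2:ℝ)^j ≤ X (j+1) := by
    intro j
    induction j with
    | zero =>
      rw [hXrec]
      nlinarith [sq_nonneg (X 0)]
    | succ n ih =>
      rw [hXrec (n+1), pow_succ]
      have h2 : (0:ℝ) < 2^n := by positivity
      nlinarith [sq_nonneg (X (n+1) - 1)]
  set f : ℕ → ℝ := fun j => Real.log (X j ^ 2 / X (j+1)) with hf
  have hfle : ∀ j, |f j| ≤ 1 / X j ^ 2 := by
    intro j
    have hXj := hpos j
    have hXj1 := hpos (j+1)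
    have hratio : X j ^ 2 / X (j+1) ≤ 1 := by
      rw [div_le_one hXj1, hXrec]; linarith
    have hratpos : 0 < X j ^ 2 / X (j+1) := by positivity
    have hneg : f j ≤ 0 := Real.log_nonpos (le_of_lt hratpos) hratio
    have hinvpos : 0 < X (j+1) / X j ^ 2 := by positivity
    have hlog : Real.log (X (j+1) / X j ^ 2) ≤ X (j+1) / X j ^ 2 - 1 :=
      Real.log_le_sub_one_of_pos hinvpos
    have hflip : -f j = Real.log (X (j+1) / X j ^ 2) := by
      rw [hf]
      rw [← Real.log_inv]
      congr 1
      field_simp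
    have hval : X (j+1) / X j ^ 2 - 1 = 1 / X j ^ 2 := by
      rw [hXrec]; field_simp; ring
    rw [abs_of_nonpos hneg, hflip]
    linarith [hlog, hval.le]
  have hbound : ∀ j : ℕ, |f (j+1)| ≤ (1/4 : ℝ)^j := by
    intro j
    refine (hfle (j+1)).trans ?_
    have h1 : (2:ℝ)^j ≤ X (j+1) := hge j
    have h2 : (0:ℝ) < (2:ℝ)^j := by positivity
    have hsq : ((2:ℝ)^j)^2 = 4^j := by
      rw [← pow_mul, mul_comm, pow_mul]; norm_num
    have h3 : (4:ℝ)^j ≤ X (j+1)^2 := by nlinarith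
    calc 1 / X (j+1)^2 ≤ 1 / (4:ℝ)^j :=
          one_div_le_one_div_of_le (by positivity) h3
      _ = (1/4:ℝ)^j := by rw [one_div_pow]
  have hgeo : Summable (fun j : ℕ => (1/4 : ℝ)^j) :=
    summable_geometric_of_lt_one (by norm_num) (by norm_num)
  have habs : Summable (fun j : ℕ => |f (j+1)|) :=
    Summable.of_nonneg_of_le (fun j => abs_nonneg _) hbound hgeo
  have hshift : Summable (fun j : ℕ => f (j+1)) := summable_abs_iff.mp habs
  have hsum : Summable f := (summable_nat_add_iff 1).mp hshift
  obtain ⟨S, hS⟩ := hsum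
  have htend : Tendsto (fun n => ∑ j ∈ Finset.range n, f j) atTop (𝓝 S) :=
    hS.tendsto_sum_nat
  refine ⟨(1/x) * Real.exp S, by positivity, ?_⟩
  have heq : ∀ n, (∏ j ∈ Finset.range n, X j) / X n
      = (1/x) * Real.exp (∑ j ∈ Finset.range n, f j) := by
    intro n
    induction n with
    | zero => simp [hX0]
    | succ n ih =>
      rw [Finset.prod_range_succ, Finset.sum_range_succ, Real.exp_add, ← mul_assoc,
        ← ih, hf]
      have hXn := hpos n
      have hXn1 := hpos (n+1)
      rw [Real.exp_log (by positivity : (0:ℝ) < X n ^ 2 / X (n+1))]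
      field_simp
  have : Tendsto (fun n => (1/x) * Real.exp (∑ j ∈ Finset.range n, f j)) atTop
      (𝓝 ((1/x) * Real.exp S)) :=
    ((Real.continuous_exp.tendsto S).comp htend).const_mul _
  exact this.congr (fun n => (heq n).symm)
end

section
/- Let f₁ : ℝ → ℝ be defined by f₁(x) = √((1 + x²)^{√2} − 1). Then the derivative f₁′(x) tends to 2^{1/4} as x → 0⁺ and tends to −2^{1/4} as x → 0⁻; in particular f₁ is not differentiable at 0. -/
open Filter Topology

lemma aux_lt (x : ℝ) (hx : x ≠ 0) : (1:ℝ) < (1 + x ^ 2) ^ Real.sqrt 2 := by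
  have h1 : (1:ℝ) < 1 + x ^ 2 := by
    have : 0 < x ^ 2 := by positivity
    linarith
  calc (1:ℝ) = 1 ^ Real.sqrt 2 := (Real.one_rpow _).symm
    _ < (1 + x ^ 2) ^ Real.sqrt 2 :=
      Real.rpow_lt_rpow (by norm_num) h1 (by positivity)

lemma q_tendsto :
    Tendsto (fun x : ℝ => ((1 + x ^ 2) ^ Real.sqrt 2 - 1) / x ^ 2)
      (𝓝[≠] (0:ℝ)) (𝓝 (Real.sqrt 2)) := by
  have hg : HasDerivAt (fun t : ℝ => (1 + t) ^ Real.sqrt 2) (Real.sqrt 2) 0 := by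
    have h1 : HasDerivAt (fun t : ℝ => 1 + t) 1 0 := (hasDerivAt_id 0).const_add 1
    have h2 : HasDerivAt (fun y : ℝ => y ^ Real.sqrt 2)
        (Real.sqrt 2 * (1:ℝ) ^ (Real.sqrt 2 - 1)) ((fun t : ℝ => 1 + t) 0) := by
      have := Real.hasDerivAt_rpow_const (p := Real.sqrt 2) (x := (1:ℝ))
        (Or.inl one_ne_zero)
      simpa using this
    have h3 := h2.comp 0 h1
    simpa [Function.comp_def] using h3
  have hs := hasDerivAt_iff_tendsto_slope.mp hg
  have hsq : Tendsto (fun x : ℝ => x ^ 2) (𝓝[≠] (0:ℝ)) (𝓝[≠] (0:ℝ)) := by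
    apply tendsto_nhdsWithin_of_tendsto_nhds_of_eventually_within
    · exact ((continuous_pow 2).tendsto' 0 0 (by simp)).mono_left nhdsWithin_le_nhds
    · filter_upwards [self_mem_nhdsWithin] with x hx using pow_ne_zero 2 hx
  have h := hs.comp hsq
  refine h.congr (fun x => ?_)
  simp [slope_def_field, Function.comp, Real.one_rpow]

lemma root_eq : Real.sqrt (Real.sqrt 2) = (2:ℝ) ^ ((1:ℝ)/4) := by
  rw [Real.sqrt_eq_rpow, Real.sqrt_eq_rpow,
    ← Real.rpow_mul (by norm_num : (0:ℝ) ≤ 2)]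
  norm_num

lemma hderiv (x : ℝ) (hx : x ≠ 0) :
    HasDerivAt (fun x : ℝ => Real.sqrt ((1 + x ^ 2) ^ Real.sqrt 2 - 1))
      (Real.sqrt 2 * (1 + x ^ 2) ^ (Real.sqrt 2 - 1) * (2 * x) /
        (2 * Real.sqrt ((1 + x ^ 2) ^ Real.sqrt 2 - 1))) x := by
  have hpos : (0:ℝ) < 1 + x ^ 2 := by positivity
  have h1 : HasDerivAt (fun x : ℝ => 1 + x ^ 2) (2 * x) x := by
    simpa using (hasDerivAt_pow 2 x).const_add 1
  have h2 : HasDerivAt (fun y : ℝ => y ^ Real.sqrt 2)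
      (Real.sqrt 2 * (1 + x ^ 2) ^ (Real.sqrt 2 - 1)) ((fun x : ℝ => 1 + x ^ 2) x) :=
    Real.hasDerivAt_rpow_const (Or.inl (ne_of_gt hpos))
  have h3 := (h2.comp x h1).sub_const 1
  have hne : (1 + x ^ 2) ^ Real.sqrt 2 - 1 ≠ 0 := by
    have := aux_lt x hx; linarith
  simpa [mul_assoc] using h3.sqrt hne

lemma sqrt_factor (x : ℝ) (hx : x ≠ 0) :
    Real.sqrt ((1 + x ^ 2) ^ Real.sqrt 2 - 1) =
      Real.sqrt (((1 + x ^ 2) ^ Real.sqrt 2 - 1) / x ^ 2) * |x| := by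
  have hD : (0:ℝ) < (1 + x ^ 2) ^ Real.sqrt 2 - 1 := by
    have := aux_lt x hx; linarith
  have hx2 : (0:ℝ) < x ^ 2 := by positivity
  rw [← Real.sqrt_sq_eq_abs, ← Real.sqrt_mul (by positivity),
    div_mul_cancel₀ _ (ne_of_gt hx2)]

lemma q_pos (x : ℝ) (hx : x ≠ 0) :
    (0:ℝ) < ((1 + x ^ 2) ^ Real.sqrt 2 - 1) / x ^ 2 := by
  have hD : (0:ℝ) < (1 + x ^ 2) ^ Real.sqrt 2 - 1 := by
    have := aux_lt x hx; linarith
  positivity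

lemma sqrtq_tendsto :
    Tendsto (fun x : ℝ => Real.sqrt (((1 + x ^ 2) ^ Real.sqrt 2 - 1) / x ^ 2))
      (𝓝[≠] (0:ℝ)) (𝓝 ((2:ℝ) ^ ((1:ℝ)/4))) := by
  have := q_tendsto.sqrt
  rwa [root_eq] at this

lemma A_tendsto :
    Tendsto (fun x : ℝ => (1 + x ^ 2) ^ (Real.sqrt 2 - 1)) (𝓝 (0:ℝ)) (𝓝 1) := by
  have hc : ContinuousAt (fun x : ℝ => (1 + x ^ 2) ^ (Real.sqrt 2 - 1)) 0 := by
    apply ContinuousAt.rpow_const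
    · exact (continuous_const.add (continuous_pow 2)).continuousAt
    · left; norm_num
  have := hc.tendsto
  simpa using this

lemma hval : Real.sqrt 2 / (2:ℝ) ^ ((1:ℝ)/4) = (2:ℝ) ^ ((1:ℝ)/4) := by
  rw [Real.sqrt_eq_rpow, ← Real.rpow_sub (by norm_num : (0:ℝ) < 2)]
  norm_num

/-- For `f₁(x) = √((1 + x²)^{√2} − 1)`, the derivative `f₁′(x)` tends to
`2^{1/4}` as `x → 0⁺` and to `−2^{1/4}` as `x → 0⁻`; in particular `f₁` is not
differentiable at `0`. -/
theorem stmt_19 (f₁ : ℝ → ℝ)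
    (hf₁ : ∀ x : ℝ, f₁ x = Real.sqrt ((1 + x ^ 2) ^ Real.sqrt 2 - 1)) :
    Tendsto (fun x => deriv f₁ x) (𝓝[>] (0 : ℝ))
        (𝓝 ((2 : ℝ) ^ ((1 : ℝ) / 4))) ∧
      Tendsto (fun x => deriv f₁ x) (𝓝[<] (0 : ℝ))
        (𝓝 (-((2 : ℝ) ^ ((1 : ℝ) / 4)))) ∧
      ¬ DifferentiableAt ℝ f₁ 0 := by
  have hfe : f₁ = fun x : ℝ => Real.sqrt ((1 + x ^ 2) ^ Real.sqrt 2 - 1) := funext hf₁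
  subst hfe
  have hsubR : 𝓝[>] (0:ℝ) ≤ 𝓝[≠] (0:ℝ) :=
    nhdsWithin_mono _ (fun x (hx : x ∈ Set.Ioi 0) => ne_of_gt hx)
  have hsubL : 𝓝[<] (0:ℝ) ≤ 𝓝[≠] (0:ℝ) :=
    nhdsWithin_mono _ (fun x (hx : x ∈ Set.Iio 0) => ne_of_lt hx)
  have hderiv_eq : ∀ x : ℝ, x ≠ 0 →
      deriv (fun x : ℝ => Real.sqrt ((1 + x ^ 2) ^ Real.sqrt 2 - 1)) x =
        Real.sqrt 2 * (1 + x ^ 2) ^ (Real.sqrt 2 - 1) * x /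
          (Real.sqrt (((1 + x ^ 2) ^ Real.sqrt 2 - 1) / x ^ 2) * |x|) := by
    intro x hx
    rw [(hderiv x hx).deriv, sqrt_factor x hx]
    have hs : Real.sqrt (((1 + x ^ 2) ^ Real.sqrt 2 - 1) / x ^ 2) ≠ 0 :=
      ne_of_gt (Real.sqrt_pos.mpr (q_pos x hx))
    have ha : |x| ≠ 0 := abs_ne_zero.mpr hx
    field_simp
  have hT : Tendsto (fun x : ℝ => Real.sqrt 2 * (1 + x ^ 2) ^ (Real.sqrt 2 - 1) /
      Real.sqrt (((1 + x ^ 2) ^ Real.sqrt 2 - 1) / x ^ 2))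
      (𝓝[≠] (0:ℝ)) (𝓝 ((2:ℝ) ^ ((1:ℝ)/4))) := by
    have h1 : Tendsto (fun x : ℝ => Real.sqrt 2 * (1 + x ^ 2) ^ (Real.sqrt 2 - 1))
        (𝓝[≠] (0:ℝ)) (𝓝 (Real.sqrt 2)) := by
      have := (tendsto_const_nhds (x := Real.sqrt 2) (f := 𝓝[≠] (0:ℝ))).mul
        (A_tendsto.mono_left nhdsWithin_le_nhds)
      simpa using this
    have hne : ((2:ℝ) ^ ((1:ℝ)/4)) ≠ 0 := by positivity
    have := h1.div sqrtq_tendsto hne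
    rwa [hval] at this
  refine ⟨?_, ?_, ?_⟩
  · apply ((hT.mono_left hsubR).congr' ?_)
    filter_upwards [self_mem_nhdsWithin] with x hx
    have hx0 : x ≠ 0 := ne_of_gt hx
    rw [hderiv_eq x hx0, abs_of_pos hx]
    have hs : Real.sqrt (((1 + x ^ 2) ^ Real.sqrt 2 - 1) / x ^ 2) ≠ 0 :=
      ne_of_gt (Real.sqrt_pos.mpr (q_pos x hx0))
    rw [mul_div_mul_right _ _ hx0]
  · apply (((hT.mono_left hsubL).neg).congr' ?_)
    filter_upwards [self_mem_nhdsWithin] with x hx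
    have hx0 : x ≠ 0 := ne_of_lt hx
    rw [hderiv_eq x hx0, abs_of_neg hx, mul_neg, div_neg,
      mul_div_mul_right _ _ hx0]
  · intro hdiff
    have hs := hasDerivAt_iff_tendsto_slope.mp hdiff.hasDerivAt
    have hF0 : Real.sqrt ((1 + (0:ℝ) ^ 2) ^ Real.sqrt 2 - 1) = 0 := by
      simp [Real.one_rpow]
    have e1 : Tendsto (fun x : ℝ => Real.sqrt (((1 + x ^ 2) ^ Real.sqrt 2 - 1) / x ^ 2))
        (𝓝[>] (0:ℝ))
        (𝓝 (deriv (fun x : ℝ => Real.sqrt ((1 + x ^ 2) ^ Real.sqrt 2 - 1)) 0)) := by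
      apply (hs.mono_left hsubR).congr'
      filter_upwards [self_mem_nhdsWithin] with x hx
      have hx0 : x ≠ 0 := ne_of_gt hx
      rw [slope_def_field, hF0, sub_zero, sub_zero, sqrt_factor x hx0, abs_of_pos hx,
        mul_div_assoc, div_self hx0, mul_one]
    have e1' : Tendsto (fun x : ℝ => Real.sqrt (((1 + x ^ 2) ^ Real.sqrt 2 - 1) / x ^ 2))
        (𝓝[>] (0:ℝ)) (𝓝 ((2:ℝ) ^ ((1:ℝ)/4))) := sqrtq_tendsto.mono_left hsubR
    have e2 : Tendsto (fun x : ℝ => -Real.sqrt (((1 + x ^ 2) ^ Real.sqrt 2 - 1) / x ^ 2))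
        (𝓝[<] (0:ℝ))
        (𝓝 (deriv (fun x : ℝ => Real.sqrt ((1 + x ^ 2) ^ Real.sqrt 2 - 1)) 0)) := by
      apply (hs.mono_left hsubL).congr'
      filter_upwards [self_mem_nhdsWithin] with x hx
      have hx0 : x ≠ 0 := ne_of_lt hx
      rw [slope_def_field, hF0, sub_zero, sub_zero, sqrt_factor x hx0, abs_of_neg hx,
        mul_neg, neg_div, mul_div_assoc, div_self hx0, mul_one]
    have e2' : Tendsto (fun x : ℝ => -Real.sqrt (((1 + x ^ 2) ^ Real.sqrt 2 - 1) / x ^ 2))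
        (𝓝[<] (0:ℝ)) (𝓝 (-((2:ℝ) ^ ((1:ℝ)/4)))) := (sqrtq_tendsto.mono_left hsubL).neg
    have hu1 := tendsto_nhds_unique e1 e1'
    have hu2 := tendsto_nhds_unique e2 e2'
    have hpos : (0:ℝ) < (2:ℝ) ^ ((1:ℝ)/4) := by positivity
    rw [hu1] at hu2
    linarith
end
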